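/- Let H0, H* ∈ H^stub_s(d) such that M(H0 Δ H*) consists of exactly one minimal alternating cycle C* containing the edges e1 = {a,b}_{H0,t}, e2 = {b,c}_{H*,t}, e3 = {c,d}_{H0,s}, e4 = {a,d}_{H0,s} with a, b, c, d pairwise distinct. Then M(H0 Δ H*) does not contain an edge {a,c}_{H*,u} for any tail label u. -/
import Mathlib


open Finset

/-!
Common setting: fix a vertex set `V` and two tail labels `τ, σ`, encoded as
`Bool` with `true = τ` and `false = σ`.  A hyperarc is a pair `(t, {a,b})`
consisting of a tail label and an unordered pair of vertices; it is degenerate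
if `a = b`.  A hypergraph is a finite set of pairwise distinct non-degenerate
hyperarcs; `H^stub_s(d)` is the set of such hypergraphs realizing the degree
sequence `d` (stub degree of each vertex and number of hyperarcs per tail).
`M(H0 Δ H*)` is the edge-labeled multigraph whose edges record the hyperarcs
of the symmetric difference together with the hypergraph (`lab`, `true = H0`)
containing them and their tail.
-/

/-- Tail labels: `true = τ`, `false = σ`. -/
abbrev Tail := Bool

/-- A hyperarc: a tail label together with an unordered pair of vertices. -/
abbrev Hyperarc (V : Type*) := Tail × Sym2 V

/-- A (stub) degree sequence: the stub degree of every vertex together with the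
number of hyperarcs carrying each tail label. -/
structure DegreeSeq (V : Type*) where
  vdeg : V → ℕ
  tdeg : Tail → ℕ

/-- `A` is a hypergraph in `H^stub_s(d)`: a set of pairwise distinct (this is
automatic for a `Finset`) non-degenerate hyperarcs realizing the degree
sequence `D`. -/
def Realizes {V : Type*} [DecidableEq V] (A : Finset (Hyperarc V)) (D : DegreeSeq V) : Prop :=
  (∀ e ∈ A, ¬ e.2.IsDiag) ∧
  (∀ v : V, (A.filter fun e => v ∈ e.2).card = D.vdeg v) ∧
  (∀ t : Tail, (A.filter fun e => e.1 = t).card = D.tdeg t)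

/-- An edge `{a,b}_{X,t}` of the multigraph `M(H0 Δ H*)`: its label (`true`
means it comes from `H0`, `false` from `H*`), its tail `t` and its endpoints
`{a,b}`. -/
structure MEdge (V : Type*) where
  lab : Bool
  tail : Tail
  ends : Sym2 V
deriving DecidableEq

/-- `M⁻¹`: the hyperarc underlying an edge of `M(H0 Δ H*)`. -/
def MEdge.arc {V : Type*} (e : MEdge V) : Hyperarc V := (e.tail, e.ends)

/-- The edge set of the edge-labeled multigraph `M(H0 Δ H*)`: every hyperarc of
`A(H0) \ A(H*)` becomes an edge labeled `H0` (i.e. `true`) and every hyperarc of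
`A(H*) \ A(H0)` becomes an edge labeled `H*` (i.e. `false`). -/
def mEdges {V : Type*} [DecidableEq V] (A0 A1 : Finset (Hyperarc V)) : Finset (MEdge V) :=
  ((A0 \ A1).image fun h => ⟨true, h.1, h.2⟩) ∪
    ((A1 \ A0).image fun h => ⟨false, h.1, h.2⟩)

/-- An alternating cycle in the edge set `E` of `M(H0 Δ H*)`: a closed trail
(cyclic sequence of pairwise distinct edges, consecutive edges sharing an
endpoint) whose edges alternate between label `H0` and label `H*`. -/
structure AltCycle {V : Type*} (E : Finset (MEdge V)) where
  /-- the length of the cycle -/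
  n : ℕ
  two_le : 2 ≤ n
  /-- the cyclic sequence of edges -/
  edge : ℕ → MEdge V
  /-- the cyclic sequence of vertices visited -/
  vert : ℕ → V
  edge_periodic : ∀ i, edge (i + n) = edge i
  vert_periodic : ∀ i, vert (i + n) = vert i
  mem : ∀ i, edge i ∈ E
  inj : ∀ i < n, ∀ j < n, edge i = edge j → i = j
  ends_eq : ∀ i, (edge i).ends = s(vert i, vert (i + 1))
  alt : ∀ i, (edge i).lab = !(edge (i + 1)).lab

/-- The set of edges used by an alternating cycle. -/
def AltCycle.edges {V : Type*} [DecidableEq V] {E : Finset (MEdge V)} (C : AltCycle E) :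
    Finset (MEdge V) :=
  (Finset.range C.n).image C.edge

/-- A minimal alternating cycle: one containing no proper alternating subcycle. -/
def AltCycle.Minimal {V : Type*} [DecidableEq V] {E : Finset (MEdge V)} (C : AltCycle E) : Prop :=
  ∀ C' : AltCycle E, C'.edges ⊆ C.edges → C'.edges = C.edges

/-- `|f_{X,t}(M(H0 Δ H*))|`: the number of edges of `M(H0 Δ H*)` labeled with
hypergraph `l` (`true = H0`) and tail `t`. -/
def labTailCount {V : Type*} [DecidableEq V] (A0 A1 : Finset (Hyperarc V))
    (l : Bool) (t : Tail) : ℕ :=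
  ((mEdges A0 A1).filter fun e => e.lab = l ∧ e.tail = t).card

/-- `H` and `H'` differ by a single hypershuffle move, i.e. they are adjacent in
`G(H^stub_s(d))`: their symmetric difference consists of 4 hyperarcs,
`M(H Δ H')` is an alternating cycle, and the number of tail-τ edges labeled `H`
equals the number of tail-τ edges labeled `H'`. -/
def HypershuffleAdj {V : Type*} [DecidableEq V] (A0 A1 : Finset (Hyperarc V)) : Prop :=
  ((A0 \ A1) ∪ (A1 \ A0)).card = 4 ∧
  (∃ C : AltCycle (mEdges A0 A1), C.edges = mEdges A0 A1) ∧
  labTailCount A0 A1 true true = labTailCount A0 A1 false true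
set_option linter.unusedSectionVars false

section Helpers

variable {V : Type*} [DecidableEq V]

private lemma periodic_mod {α : Type*} (f : ℕ → α) (n : ℕ) (hn : 0 < n)
    (hf : ∀ i, f (i + n) = f i) : ∀ i, f i = f (i % n) := by
  intro i
  induction i using Nat.strong_induction_on with
  | _ i ih =>
    rcases lt_or_ge i n with h | h
    · rw [Nat.mod_eq_of_lt h]
    · have h1 : i - n + n = i := Nat.sub_add_cancel h
      have h2 := hf (i - n)
      rw [h1] at h2
      rw [h2, ih (i - n) (by omega), ← Nat.add_mod_right (i - n) n, h1]

namespace AltCycle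

variable {E : Finset (MEdge V)} (C : AltCycle E)

lemma npos : 0 < C.n := by have := C.two_le; omega

lemma edge_mod (i : ℕ) : C.edge i = C.edge (i % C.n) :=
  periodic_mod C.edge C.n C.npos C.edge_periodic i

lemma vert_mod (i : ℕ) : C.vert i = C.vert (i % C.n) :=
  periodic_mod C.vert C.n C.npos C.vert_periodic i

lemma edge_congr {i j : ℕ} (h : i ≡ j [MOD C.n]) : C.edge i = C.edge j := by
  rw [C.edge_mod i, C.edge_mod j, show i % C.n = j % C.n from h]

lemma vert_congr {i j : ℕ} (h : i ≡ j [MOD C.n]) : C.vert i = C.vert j := by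
  rw [C.vert_mod i, C.vert_mod j, show i % C.n = j % C.n from h]

lemma edge_inj' {i j : ℕ} (h : C.edge i = C.edge j) : i ≡ j [MOD C.n] := by
  have := C.inj (i % C.n) (Nat.mod_lt _ C.npos) (j % C.n) (Nat.mod_lt _ C.npos)
    (by rw [← C.edge_mod, ← C.edge_mod, h])
  exact this

lemma lab_succ (i : ℕ) : (C.edge (i + 1)).lab = !(C.edge i).lab := by
  rw [C.alt i, Bool.not_not]

lemma edge_mem_edges (i : ℕ) : C.edge i ∈ C.edges := by
  rw [AltCycle.edges]
  exact Finset.mem_image.mpr ⟨i % C.n, Finset.mem_range.mpr (Nat.mod_lt _ C.npos),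
    (C.edge_mod i).symm⟩

end AltCycle

end Helpers
section Helpers2

variable {V : Type*} [DecidableEq V]

private lemma gap_spec (n : ℕ) (hn : 0 < n) (i j : ℕ) :
    i + ((j % n + (n - i % n)) % n) ≡ j [MOD n] := by
  have h1 : i % n < n := Nat.mod_lt _ hn
  have e1 : (j % n + (n - i % n)) % n ≡ j % n + (n - i % n) [MOD n] := Nat.mod_modEq _ n
  have e2 : i ≡ i % n [MOD n] := (Nat.mod_modEq i n).symm
  calc i + ((j % n + (n - i % n)) % n)
      ≡ i % n + (j % n + (n - i % n)) [MOD n] := Nat.ModEq.add e2 e1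
    _ = n + j % n := by omega
    _ ≡ 0 + j % n [MOD n] := Nat.ModEq.add_right _ (by simp [Nat.ModEq])
    _ = j % n := by omega
    _ ≡ j [MOD n] := Nat.mod_modEq j n

private lemma succ_mod_cases (m k : ℕ) (hm : 2 ≤ m) :
    (k % m = m - 1 ∧ (k + 1) % m = 0) ∨ (k % m < m - 1 ∧ (k + 1) % m = k % m + 1) := by
  have h1 : k % m < m := Nat.mod_lt _ (by omega)
  have h2 : (k + 1) % m = (k % m + 1) % m := by
    conv_lhs => rw [Nat.add_mod, Nat.mod_eq_of_lt (show 1 < m by omega)]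
  rcases eq_or_lt_of_le (Nat.succ_le_of_lt h1) with he | he
  · left
    constructor
    · omega
    · rw [h2, show k % m + 1 = m by omega, Nat.mod_self]
  · right
    constructor
    · omega
    · rw [h2, Nat.mod_eq_of_lt (by omega)]

private lemma modeq_eq {n i j : ℕ} (h : i ≡ j [MOD n]) (hi : i < n) (hj : j < n) : i = j := by
  have : i % n = j % n := h
  rwa [Nat.mod_eq_of_lt hi, Nat.mod_eq_of_lt hj] at this

namespace AltCycle

variable {E : Finset (MEdge V)} (C : AltCycle E)

/-- Core lemma: a minimal alternating cycle has no proper alternating subcycle. -/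
lemma not_proper (hmin : C.Minimal) (m : ℕ) (hm : 2 ≤ m) (F : ℕ → MEdge V) (G : ℕ → V)
    (hFper : ∀ i, F (i + m) = F i) (hGper : ∀ i, G (i + m) = G i)
    (hmemE : ∀ i, F i ∈ E)
    (hinj : ∀ i < m, ∀ j < m, F i = F j → i = j)
    (hends : ∀ i, (F i).ends = s(G i, G (i + 1)))
    (halt : ∀ i, (F i).lab = !(F (i + 1)).lab)
    (hsub : ∀ i, F i ∈ C.edges)
    (E₀ : MEdge V) (hE₀ : E₀ ∈ C.edges) (hE₀n : ∀ i, F i ≠ E₀) : False := by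
  let C' : AltCycle E := ⟨m, hm, F, G, hFper, hGper, hmemE, hinj, hends, halt⟩
  have hss : C'.edges ⊆ C.edges := by
    intro x hx
    rw [AltCycle.edges] at hx
    obtain ⟨i, _, rfl⟩ := Finset.mem_image.mp hx
    exact hsub i
  have heq := hmin C' hss
  rw [← heq, AltCycle.edges] at hE₀
  obtain ⟨i, _, hi⟩ := Finset.mem_image.mp hE₀
  exact hE₀n i hi

/-- Two positions with the same vertex and same outgoing label coincide mod `n`. -/
lemma same_pos (hmin : C.Minimal) (hnd : ∀ x ∈ E, ¬ x.ends.IsDiag) {i j : ℕ}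
    (hv : C.vert i = C.vert j) (hl : (C.edge i).lab = (C.edge j).lab) :
    i ≡ j [MOD C.n] := by
  by_contra hne
  set n := C.n with hn
  set m := (j % n + (n - i % n)) % n with hmdef
  have key : i + m ≡ j [MOD n] := gap_spec n C.npos i j
  have hm0 : m ≠ 0 := by
    intro h0
    rw [h0, Nat.add_zero] at key
    exact hne key
  have hmn : m < n := Nat.mod_lt _ C.npos
  have hv' : C.vert (i + m) = C.vert i := (C.vert_congr key).trans hv.symm
  have hl' : (C.edge (i + m)).lab = (C.edge i).lab :=
    (congrArg MEdge.lab (C.edge_congr key)).trans hl.symm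
  rcases eq_or_lt_of_le (show 1 ≤ m by omega) with h1 | h2
  · -- m = 1 : loop edge, contradicts non-degeneracy
    have hvv : C.vert (i + 1) = C.vert i := by rw [← h1] at hv'; exact hv'
    have := C.ends_eq i
    rw [hvv] at this
    exact hnd (C.edge i) (C.mem i) (by rw [this]; exact Sym2.mk_isDiag_iff.mpr rfl)
  · -- 2 ≤ m : the segment [i, i+m) is a proper alternating subcycle
    apply C.not_proper hmin m h2 (fun k => C.edge (i + k % m)) (fun k => C.vert (i + k % m))
      (fun k => by show C.edge (i + (k + m) % m) = _; rw [Nat.add_mod_right])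
      (fun k => by show C.vert (i + (k + m) % m) = _; rw [Nat.add_mod_right])
      (fun k => C.mem _)
    · -- inj
      intro x hx y hy hxy
      simp only [Nat.mod_eq_of_lt hx, Nat.mod_eq_of_lt hy] at hxy
      have := C.edge_inj' hxy
      have hc : x ≡ y [MOD n] := Nat.ModEq.add_left_cancel' i this
      exact modeq_eq hc (lt_trans hx hmn) (lt_trans hy hmn)
    · -- ends
      intro k
      have h := C.ends_eq (i + k % m)
      rcases succ_mod_cases m k h2 with ⟨he, hk1⟩ | ⟨he, hk1⟩
      · rw [hk1]
        have heq : i + k % m + 1 = i + m := by omega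
        rw [heq] at h
        rw [h, hv']
        simp
      · rw [hk1]
        exact h
    · -- alt
      intro k
      rcases succ_mod_cases m k h2 with ⟨he, hk1⟩ | ⟨he, hk1⟩
      · rw [hk1]
        have h := C.alt (i + k % m)
        have h2' : i + k % m + 1 = i + m := by omega
        rw [h2'] at h
        rw [h]
        simp only [Nat.add_zero]
        rw [hl']
      · rw [hk1]
        have := C.alt (i + k % m)
        rw [show i + k % m + 1 = i + (k % m + 1) by omega] at this
        exact this
    · -- sub
      intro k; exact C.edge_mem_edges _
    · exact C.edge_mem_edges (i + m)
    · -- the omitted edge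
      intro k
      intro hk
      have := C.edge_inj' hk
      have hc : k % m ≡ m [MOD n] := Nat.ModEq.add_left_cancel' i this
      have hlt : k % m < m := Nat.mod_lt _ (by omega)
      have : k % m = m := modeq_eq hc (lt_trans hlt hmn) hmn
      omega

end AltCycle

end Helpers2
section Helpers3

variable {V : Type*} [DecidableEq V]

namespace AltCycle

variable {E : Finset (MEdge V)} (C : AltCycle E)

lemma jump (hmin : C.Minimal) {δ π γ : ℕ}
    (h1 : ¬ γ ≡ π [MOD C.n]) (h2 : ¬ γ + 1 ≡ π [MOD C.n]) (h3 : ¬ γ + 2 ≡ π [MOD C.n])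
    (h4 : δ ≡ γ + 2 [MOD C.n] ∨ δ + 3 ≡ π [MOD C.n])
    (hends : (C.edge δ).ends = s(C.vert γ, C.vert π))
    (hl1 : (C.edge γ).lab = (C.edge δ).lab)
    (hl2 : (C.edge π).lab = !(C.edge δ).lab) : False := by
  have hnpos := C.npos
  set n := C.n with hn
  set g := (γ % n + (n - π % n)) % n with hgdef
  have key : π + g ≡ γ [MOD n] := gap_spec n hnpos π γ
  have hgn : g < n := Nat.mod_lt _ hnpos
  have hg1 : 1 ≤ g := by
    rcases Nat.eq_zero_or_pos g with h0 | h
    · exfalso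
      apply h1
      rw [h0, Nat.add_zero] at key
      exact key.symm
    · exact h
  have hadd : ∀ x : ℕ, x + n ≡ x [MOD n] := fun x => Nat.add_mod_right x n
  have hg2 : g ≠ n - 1 := by
    intro he
    apply h2
    have key' : π + (n - 1) ≡ γ [MOD n] := he ▸ key
    have h5 : γ + 1 ≡ π + (n - 1) + 1 [MOD n] := (key'.symm).add_right 1
    rw [show π + (n - 1) + 1 = π + n by omega] at h5
    exact h5.trans (hadd π)
  have hg3 : g ≠ n - 2 := by
    intro he
    apply h3
    have key' : π + (n - 2) ≡ γ [MOD n] := he ▸ key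
    have h5 : γ + 2 ≡ π + (n - 2) + 2 [MOD n] := (key'.symm).add_right 2
    rw [show π + (n - 2) + 2 = π + n by omega] at h5
    exact h5.trans (hadd π)
  have hgle : g ≤ n - 3 := by omega
  have hn4 : 4 ≤ n := by omega
  obtain ⟨k₀, hk₀m, hk₀lt, hk₀⟩ : ∃ k₀, g ≤ k₀ ∧ k₀ < n ∧ δ ≡ π + k₀ [MOD n] := by
    rcases h4 with h | h
    · exact ⟨g + 2, by omega, by omega, h.trans ((key.symm).add_right 2)⟩
    · refine ⟨n - 3, by omega, by omega, ?_⟩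
      have h' : δ + 3 + (n - 3) ≡ π + (n - 3) [MOD n] := h.add_right _
      rw [show δ + 3 + (n - 3) = δ + n by omega] at h'
      exact ((hadd δ).symm).trans h'
  have hm2 : 2 ≤ g + 1 := by omega
  have hmlt : ∀ k : ℕ, k % (g + 1) < g + 1 := fun k => Nat.mod_lt _ (by omega)
  refine C.not_proper hmin (g + 1) hm2
    (fun k => if k % (g + 1) = g then C.edge δ else C.edge (π + k % (g + 1)))
    (fun k => C.vert (π + k % (g + 1)))
    ?_ ?_ ?_ ?_ ?_ ?_ ?_
    (C.edge (π + (if k₀ = g then g + 1 else g))) (C.edge_mem_edges _) ?_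
  · intro k
    show (if (k + (g+1)) % (g + 1) = g then C.edge δ else C.edge (π + (k + (g+1)) % (g + 1)))
        = _
    rw [Nat.add_mod_right]
  · intro k
    show C.vert (π + (k + (g+1)) % (g + 1)) = C.vert (π + k % (g + 1))
    rw [Nat.add_mod_right]
  · intro k
    show (if k % (g + 1) = g then C.edge δ else C.edge (π + k % (g + 1))) ∈ E
    split
    · exact C.mem δ
    · exact C.mem _
  · -- inj
    intro x hx y hy hxy
    have hxm : x % (g + 1) = x := Nat.mod_eq_of_lt hx
    have hym : y % (g + 1) = y := Nat.mod_eq_of_lt hy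
    simp only [hxm, hym] at hxy
    by_cases hxg : x = g <;> by_cases hyg : y = g
    · omega
    · rw [if_pos hxg, if_neg hyg] at hxy
      have h5 := C.edge_inj' hxy
      have h6 : π + k₀ ≡ π + y [MOD n] := hk₀.symm.trans h5
      have h7 : k₀ = y := modeq_eq (Nat.ModEq.add_left_cancel' π h6) hk₀lt (by omega)
      omega
    · rw [if_neg hxg, if_pos hyg] at hxy
      have h5 := C.edge_inj' hxy.symm
      have h6 : π + k₀ ≡ π + x [MOD n] := hk₀.symm.trans h5
      have h7 : k₀ = x := modeq_eq (Nat.ModEq.add_left_cancel' π h6) hk₀lt (by omega)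
      omega
    · rw [if_neg hxg, if_neg hyg] at hxy
      have h5 := C.edge_inj' hxy
      exact modeq_eq (Nat.ModEq.add_left_cancel' π h5) (by omega) (by omega)
  · -- ends
    intro k
    rcases succ_mod_cases (g + 1) k hm2 with ⟨he, hk1⟩ | ⟨he, hk1⟩
    · have hkg : k % (g + 1) = g := by omega
      show (if k % (g + 1) = g then C.edge δ else C.edge (π + k % (g + 1))).ends
          = s(C.vert (π + k % (g + 1)), C.vert (π + (k + 1) % (g + 1)))
      rw [if_pos hkg, hkg, hk1, Nat.add_zero, hends, C.vert_congr key]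
    · have hkg : ¬ k % (g + 1) = g := by omega
      show (if k % (g + 1) = g then C.edge δ else C.edge (π + k % (g + 1))).ends
          = s(C.vert (π + k % (g + 1)), C.vert (π + (k + 1) % (g + 1)))
      rw [if_neg hkg, hk1, show π + (k % (g+1) + 1) = (π + k % (g+1)) + 1 by omega]
      exact C.ends_eq _
  · -- alt
    intro k
    rcases succ_mod_cases (g + 1) k hm2 with ⟨he, hk1⟩ | ⟨he, hk1⟩
    · have hkg : k % (g + 1) = g := by omega
      show (if k % (g + 1) = g then C.edge δ else C.edge (π + k % (g + 1))).lab
          = !(if (k + 1) % (g + 1) = g then C.edge δ else C.edge (π + (k + 1) % (g + 1))).lab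
      rw [if_pos hkg, hk1, if_neg (by omega : ¬ (0:ℕ) = g), Nat.add_zero, hl2, Bool.not_not]
    · have hkg : ¬ k % (g + 1) = g := by omega
      show (if k % (g + 1) = g then C.edge δ else C.edge (π + k % (g + 1))).lab
          = !(if (k + 1) % (g + 1) = g then C.edge δ else C.edge (π + (k + 1) % (g + 1))).lab
      rw [if_neg hkg, hk1]
      by_cases hnext : k % (g + 1) + 1 = g
      · rw [if_pos hnext]
        have h5 := C.alt (π + k % (g + 1))
        rw [show π + k % (g + 1) + 1 = π + g by omega] at h5
        rw [h5, C.edge_congr key, hl1]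
      · rw [if_neg hnext]
        have h5 := C.alt (π + k % (g + 1))
        rw [show π + k % (g + 1) + 1 = π + (k % (g + 1) + 1) by omega] at h5
        exact h5
  · -- sub
    intro k
    show (if k % (g + 1) = g then C.edge δ else C.edge (π + k % (g + 1))) ∈ C.edges
    split
    · exact C.edge_mem_edges δ
    · exact C.edge_mem_edges _
  · -- omitted edge is not hit
    intro k hk
    set r₀ := (if k₀ = g then g + 1 else g) with hr₀def
    replace hk : (if k % (g + 1) = g then C.edge δ else C.edge (π + k % (g + 1)))
        = C.edge (π + r₀) := hk
    have hr₀ : r₀ = g + 1 ∨ r₀ = g := by rw [hr₀def]; split <;> simp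
    have hr₀lt : r₀ < n := by omega
    by_cases hkg : k % (g + 1) = g
    · rw [if_pos hkg] at hk
      have h5 := C.edge_inj' hk
      have h6 : π + k₀ ≡ π + r₀ [MOD n] := hk₀.symm.trans h5
      have h7 : k₀ = r₀ := modeq_eq (Nat.ModEq.add_left_cancel' π h6) hk₀lt hr₀lt
      rw [hr₀def] at h7
      split at h7 <;> omega
    · rw [if_neg hkg] at hk
      have h5 := C.edge_inj' hk
      have h6 : k % (g + 1) = r₀ :=
        modeq_eq (Nat.ModEq.add_left_cancel' π h5) (by have := hmlt k; omega) hr₀lt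
      have := hmlt k
      omega

end AltCycle

end Helpers3
private lemma mEdges_nondiag {V : Type*} [DecidableEq V] {A0 A1 : Finset (Hyperarc V)}
    {D : DegreeSeq V} (h0 : Realizes A0 D) (h1 : Realizes A1 D) :
    ∀ x ∈ mEdges A0 A1, ¬ x.ends.IsDiag := by
  intro x hx
  rw [mEdges, Finset.mem_union] at hx
  rcases hx with hx | hx
  · obtain ⟨h, hh, rfl⟩ := Finset.mem_image.mp hx
    exact h0.1 h (Finset.mem_sdiff.mp hh).1
  · obtain ⟨h, hh, rfl⟩ := Finset.mem_image.mp hx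
    exact h1.1 h (Finset.mem_sdiff.mp hh).1

/-- the edge `{a,c}_{H*,·}` cannot exist.
`M(H0 Δ H*)` is exactly one minimal alternating cycle `C*` containing
`e1 = {a,b}_{H0,t}`, `e2 = {b,c}_{H*,t}`, `e3 = {c,d}_{H0,s}` and
`e4 = {a,d}_{H0,s}` with `a,b,c,d` pairwise distinct.  Then `M(H0 Δ H*)` does
not contain an edge `{a,c}_{H*,u}` for any tail label `u`. -/
theorem no_edge_ac {V : Type*} [DecidableEq V]
    (D : DegreeSeq V) (A0 A1 : Finset (Hyperarc V))
    (h0 : Realizes A0 D) (h1 : Realizes A1 D)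
    (C : AltCycle (mEdges A0 A1)) (hmin : C.Minimal) (hall : C.edges = mEdges A0 A1)
    (a b c d : V) (t s : Tail)
    (hdist : ([a, b, c, d] : List V).Pairwise (· ≠ ·))
    (he1 : (⟨true, t, s(a, b)⟩ : MEdge V) ∈ C.edges)
    (he2 : (⟨false, t, s(b, c)⟩ : MEdge V) ∈ C.edges)
    (he3 : (⟨true, s, s(c, d)⟩ : MEdge V) ∈ C.edges)
    (he4 : (⟨true, s, s(a, d)⟩ : MEdge V) ∈ C.edges) :
    ∀ u : Tail, (⟨false, u, s(a, c)⟩ : MEdge V) ∉ mEdges A0 A1 := by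
  intro u hu
  have hnd : ∀ x ∈ mEdges A0 A1, ¬ x.ends.IsDiag := mEdges_nondiag h0 h1
  simp only [List.pairwise_cons, List.mem_cons, List.mem_singleton, List.not_mem_nil] at hdist
  obtain ⟨hD1, hD2, hD3, -⟩ := hdist
  have hab : a ≠ b := hD1 b (by simp)
  have hac : a ≠ c := hD1 c (by simp)
  have had : a ≠ d := hD1 d (by simp)
  have hbc : b ≠ c := hD2 c (by simp)
  have hbd : b ≠ d := hD2 d (by simp)
  have hcd : c ≠ d := hD3 d (by simp)
  rw [AltCycle.edges] at he1 he2 he3 he4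
  obtain ⟨p1, -, hp1e⟩ := Finset.mem_image.mp he1
  obtain ⟨p2, -, hp2e⟩ := Finset.mem_image.mp he2
  obtain ⟨p3, -, hp3e⟩ := Finset.mem_image.mp he3
  obtain ⟨p4, -, hp4e⟩ := Finset.mem_image.mp he4
  have hu' : (⟨false, u, s(a, c)⟩ : MEdge V) ∈ C.edges := by rw [hall]; exact hu
  rw [AltCycle.edges] at hu'
  obtain ⟨p, -, hpe⟩ := Finset.mem_image.mp hu'
  have Lp : (C.edge p).lab = false := by rw [hpe]
  have L1 : (C.edge p1).lab = true := by rw [hp1e]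
  have L2 : (C.edge p2).lab = false := by rw [hp2e]
  have L3 : (C.edge p3).lab = true := by rw [hp3e]
  have L4 : (C.edge p4).lab = true := by rw [hp4e]
  have sp : ∀ i j : ℕ, C.vert i = C.vert j → (C.edge i).lab = (C.edge j).lab →
      i ≡ j [MOD C.n] := fun _ _ hv hl => C.same_pos hmin hnd hv hl
  have Ep : s(a, c) = s(C.vert p, C.vert (p + 1)) := by have h := C.ends_eq p; rw [hpe] at h; exact h
  have Ep1 : s(a, b) = s(C.vert p1, C.vert (p1 + 1)) := by have h := C.ends_eq p1; rw [hp1e] at h; exact h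
  have Ep2 : s(b, c) = s(C.vert p2, C.vert (p2 + 1)) := by have h := C.ends_eq p2; rw [hp2e] at h; exact h
  have Ep3 : s(c, d) = s(C.vert p3, C.vert (p3 + 1)) := by have h := C.ends_eq p3; rw [hp3e] at h; exact h
  have Ep4 : s(a, d) = s(C.vert p4, C.vert (p4 + 1)) := by have h := C.ends_eq p4; rw [hp4e] at h; exact h
  rcases Sym2.eq_iff.mp Ep with ⟨hva, hvc⟩ | ⟨hva, hvc⟩
  · ------------------------------------------------------------------
    -- CASE A : the extra edge is traversed a → c
    ------------------------------------------------------------------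
    have Lq : (C.edge (p + 1)).lab = true := by rw [C.lab_succ, Lp]; rfl
    -- e2 must leave c
    rcases Sym2.eq_iff.mp Ep2 with ⟨hbA, hcA⟩ | ⟨hbA, hcA⟩
    · -- e2 enters c : impossible
      have h := sp (p2 + 1) (p + 1) (by rw [← hcA, ← hvc])
        (by rw [C.lab_succ, L2, Lq]; rfl)
      have h' : p2 ≡ p [MOD C.n] := Nat.ModEq.add_right_cancel' 1 h
      have hh : (⟨false, t, s(b, c)⟩ : MEdge V) = ⟨false, u, s(a, c)⟩ := by
        rw [← hp2e, ← hpe]; exact C.edge_congr h'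
      rw [MEdge.mk.injEq] at hh
      rcases Sym2.eq_iff.mp hh.2.2 with ⟨u1, -⟩ | ⟨u1, -⟩
      · exact hab u1.symm
      · exact hbc u1
    -- hbA : b = vert (p2+1), hcA : c = vert p2
    rcases Sym2.eq_iff.mp Ep1 with ⟨ha1, hb1⟩ | ⟨ha1, hb1⟩ <;>
      rcases Sym2.eq_iff.mp Ep4 with ⟨ha4, hd4⟩ | ⟨ha4, hd4⟩
    · -- e1 and e4 both leave a : impossible
      have h := sp p1 p4 (by rw [← ha1, ← ha4]) (by rw [L1, L4])
      have hh : (⟨true, t, s(a, b)⟩ : MEdge V) = ⟨true, s, s(a, d)⟩ := by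
        rw [← hp1e, ← hp4e]; exact C.edge_congr h
      rw [MEdge.mk.injEq] at hh
      rcases Sym2.eq_iff.mp hh.2.2 with ⟨-, u2⟩ | ⟨u1, -⟩
      · exact hbd u2
      · exact had u1
    · -- CASE A2 : e4 enters a, e1 leaves a
      have hq4 : p4 + 1 ≡ p [MOD C.n] := sp (p4 + 1) p (by rw [← ha4, ← hva])
        (by rw [C.lab_succ, L4, Lp]; rfl)
      rcases Sym2.eq_iff.mp Ep3 with ⟨hc3, hd3⟩ | ⟨hc3, hd3⟩
      · -- A2(i) : e3 leaves c, right after e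
        have h3p : p3 ≡ p + 1 [MOD C.n] := sp p3 (p + 1) (by rw [← hc3, ← hvc])
          (by rw [L3, Lq])
        have hvp2 : C.vert (p + 2) = d :=
          (C.vert_congr (by
            have h5 := h3p.add_right 1
            rwa [show p + 1 + 1 = p + 2 by omega] at h5)).symm.trans hd3.symm
        have hLp2 : (C.edge (p + 2)).lab = false := by
          rw [show p + 2 = (p + 1) + 1 by omega, C.lab_succ, Lq]; rfl
        refine C.jump hmin (δ := p4) (π := p + 2) (γ := p1) ?_ ?_ ?_ ?_ ?_ ?_ ?_
        · intro h
          have hh := congrArg MEdge.lab (C.edge_congr h)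
          rw [L1, hLp2] at hh
          exact Bool.noConfusion hh
        · intro h
          have h' : p1 ≡ p + 1 [MOD C.n] := by
            have h5 : p1 + 1 ≡ p + 1 + 1 [MOD C.n] := by
              rwa [show p + 1 + 1 = p + 2 by omega]
            exact Nat.ModEq.add_right_cancel' 1 h5
          have hh : (⟨true, t, s(a, b)⟩ : MEdge V) = ⟨true, s, s(c, d)⟩ := by
            rw [← hp1e, ← hp3e]; exact C.edge_congr (h'.trans h3p.symm)
          rw [MEdge.mk.injEq] at hh
          rcases Sym2.eq_iff.mp hh.2.2 with ⟨u1, -⟩ | ⟨u1, -⟩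
          · exact hac u1
          · exact had u1
        · intro h
          have h' : p1 ≡ p [MOD C.n] := Nat.ModEq.add_right_cancel' 2 h
          have hh := congrArg MEdge.lab (C.edge_congr h')
          rw [L1, Lp] at hh
          exact Bool.noConfusion hh
        · right
          rw [show p4 + 3 = p4 + 1 + 2 by omega]
          exact hq4.add_right 2
        · rw [hp4e, ← ha1, hvp2]
        · rw [L1, L4]
        · rw [hLp2, L4]; rfl
      · -- A2(ii) : e3 and e4 both leave d : impossible
        have h := sp p3 p4 (by rw [← hd3, ← hd4]) (by rw [L3, L4])
        have hh : (⟨true, s, s(c, d)⟩ : MEdge V) = ⟨true, s, s(a, d)⟩ := by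
          rw [← hp3e, ← hp4e]; exact C.edge_congr h
        rw [MEdge.mk.injEq] at hh
        rcases Sym2.eq_iff.mp hh.2.2 with ⟨u1, -⟩ | ⟨u1, -⟩
        · exact hac u1.symm
        · exact hcd u1
    · -- CASE A1 : e1 enters a, e4 leaves a
      have hq1 : p1 + 1 ≡ p [MOD C.n] := sp (p1 + 1) p (by rw [← ha1, ← hva])
        (by rw [C.lab_succ, L1, Lp]; rfl)
      rcases Sym2.eq_iff.mp Ep3 with ⟨hc3, hd3⟩ | ⟨hc3, hd3⟩
      · -- A1(i) : e3 leaves c right after e; then e4 is forced onto e3 : impossible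
        have h3p : p3 ≡ p + 1 [MOD C.n] := sp p3 (p + 1) (by rw [← hc3, ← hvc])
          (by rw [L3, Lq])
        have hvp2 : C.vert (p + 2) = d :=
          (C.vert_congr (by
            have h5 := h3p.add_right 1
            rwa [show p + 1 + 1 = p + 2 by omega] at h5)).symm.trans hd3.symm
        have hLp2 : (C.edge (p + 2)).lab = false := by
          rw [show p + 2 = (p + 1) + 1 by omega, C.lab_succ, Lq]; rfl
        have h := sp (p4 + 1) (p + 2) (by rw [← hd4, hvp2])
          (by rw [C.lab_succ, L4, hLp2]; rfl)
        have h' : p4 ≡ p3 [MOD C.n] := by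
          have h5 : p4 + 1 ≡ p3 + 1 [MOD C.n] := by
            have h6 := h3p.add_right 1
            rw [show p + 1 + 1 = p + 2 by omega] at h6
            exact h.trans h6.symm
          exact Nat.ModEq.add_right_cancel' 1 h5
        have hh : (⟨true, s, s(a, d)⟩ : MEdge V) = ⟨true, s, s(c, d)⟩ := by
          rw [← hp4e, ← hp3e]; exact C.edge_congr h'
        rw [MEdge.mk.injEq] at hh
        rcases Sym2.eq_iff.mp hh.2.2 with ⟨u1, -⟩ | ⟨u1, -⟩
        · exact hac u1
        · exact had u1
      · -- A1(ii)
        have h32 : p3 + 1 ≡ p2 [MOD C.n] := sp (p3 + 1) p2 (by rw [← hc3, ← hcA])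
          (by rw [C.lab_succ, L3, L2]; rfl)
        have h12 : p1 ≡ p2 + 1 [MOD C.n] := sp p1 (p2 + 1) (by rw [← hb1, ← hbA])
          (by rw [L1, C.lab_succ, L2]; rfl)
        have hP : p ≡ p2 + 2 [MOD C.n] := by
          have h5 := h12.add_right 1
          rw [show p2 + 1 + 1 = p2 + 2 by omega] at h5
          exact hq1.symm.trans h5
        refine C.jump hmin (δ := p) (π := p4) (γ := p2) ?_ ?_ ?_ (Or.inl hP) ?_ ?_ ?_
        · intro h
          have hh := congrArg MEdge.lab (C.edge_congr h)
          rw [L2, L4] at hh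
          exact Bool.noConfusion hh
        · intro h
          have hh : (⟨true, s, s(a, d)⟩ : MEdge V) = ⟨true, t, s(a, b)⟩ := by
            rw [← hp4e, ← hp1e]; exact C.edge_congr ((h.symm).trans h12.symm)
          rw [MEdge.mk.injEq] at hh
          rcases Sym2.eq_iff.mp hh.2.2 with ⟨-, u2⟩ | ⟨u1, -⟩
          · exact hbd u2.symm
          · exact hab u1
        · intro h
          have hh := congrArg MEdge.lab (C.edge_congr (hP.trans h))
          rw [Lp, L4] at hh
          exact Bool.noConfusion hh
        · rw [hpe, ← hcA, ← ha4]
          exact Sym2.eq_swap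
        · rw [L2, Lp]
        · rw [L4, Lp]; rfl
    · -- e1 and e4 both enter a : impossible
      have h := sp (p1 + 1) (p4 + 1) (by rw [← ha1, ← ha4])
        (by rw [C.lab_succ, C.lab_succ, L1, L4])
      have h' : p1 ≡ p4 [MOD C.n] := Nat.ModEq.add_right_cancel' 1 h
      have hh : (⟨true, t, s(a, b)⟩ : MEdge V) = ⟨true, s, s(a, d)⟩ := by
        rw [← hp1e, ← hp4e]; exact C.edge_congr h'
      rw [MEdge.mk.injEq] at hh
      rcases Sym2.eq_iff.mp hh.2.2 with ⟨-, u2⟩ | ⟨u1, -⟩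
      · exact hbd u2
      · exact had u1
  · ------------------------------------------------------------------
    -- CASE B : the extra edge is traversed c → a
    ------------------------------------------------------------------
    -- hva : a = vert (p+1), hvc : c = vert p
    have Lq : (C.edge (p + 1)).lab = true := by rw [C.lab_succ, Lp]; rfl
    -- e2 must enter c
    rcases Sym2.eq_iff.mp Ep2 with ⟨hbA, hcA⟩ | ⟨hbA, hcA⟩
    on_goal 2 =>
      -- e2 leaves c : impossible
      have h := sp p2 p (by rw [← hcA, ← hvc]) (by rw [L2, Lp])
      have hh : (⟨false, t, s(b, c)⟩ : MEdge V) = ⟨false, u, s(a, c)⟩ := by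
        rw [← hp2e, ← hpe]; exact C.edge_congr h
      rw [MEdge.mk.injEq] at hh
      rcases Sym2.eq_iff.mp hh.2.2 with ⟨u1, -⟩ | ⟨u1, -⟩
      · exact hab u1.symm
      · exact hbc u1
    -- hbA : b = vert p2, hcA : c = vert (p2+1)
    have LqB : (C.edge (p2 + 1)).lab = true := by rw [C.lab_succ, L2]; rfl
    rcases Sym2.eq_iff.mp Ep1 with ⟨ha1, hb1⟩ | ⟨ha1, hb1⟩ <;>
      rcases Sym2.eq_iff.mp Ep4 with ⟨ha4, hd4⟩ | ⟨ha4, hd4⟩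
    · -- e1 and e4 both leave a : impossible
      have h5 : p1 ≡ p + 1 [MOD C.n] := sp p1 (p + 1) (by rw [← ha1, ← hva]) (by rw [L1, Lq])
      have h6 : p4 ≡ p + 1 [MOD C.n] := sp p4 (p + 1) (by rw [← ha4, ← hva]) (by rw [L4, Lq])
      have hh : (⟨true, t, s(a, b)⟩ : MEdge V) = ⟨true, s, s(a, d)⟩ := by
        rw [← hp1e, ← hp4e]; exact C.edge_congr (h5.trans h6.symm)
      rw [MEdge.mk.injEq] at hh
      rcases Sym2.eq_iff.mp hh.2.2 with ⟨-, u2⟩ | ⟨u1, -⟩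
      · exact hbd u2
      · exact had u1
    · -- CASE B1 : e1 leaves a (right after e), e4 enters a
      have hq1 : p1 ≡ p + 1 [MOD C.n] := sp p1 (p + 1) (by rw [← ha1, ← hva]) (by rw [L1, Lq])
      rcases Sym2.eq_iff.mp Ep3 with ⟨hc3, hd3⟩ | ⟨hc3, hd3⟩
      · -- B1(ii)
        have h32 : p3 ≡ p2 + 1 [MOD C.n] := sp p3 (p2 + 1) (by rw [← hc3, ← hcA])
          (by rw [L3, LqB])
        have h12 : p1 + 1 ≡ p2 [MOD C.n] := sp (p1 + 1) p2 (by rw [← hb1, ← hbA])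
          (by rw [C.lab_succ, L1, L2]; rfl)
        have hP2 : p2 ≡ p + 2 [MOD C.n] := by
          have h5 := hq1.add_right 1
          rw [show p + 1 + 1 = p + 2 by omega] at h5
          exact h12.symm.trans h5
        have h33 : p3 ≡ p + 3 [MOD C.n] := by
          have h5 := hP2.add_right 1
          rw [show p + 2 + 1 = p + 3 by omega] at h5
          exact h32.trans h5
        have hE3lab : (C.edge (p + 3)).lab = true := by
          rw [← C.edge_congr h33, L3]
        have hV3 : C.vert (p + 3) = c := (C.vert_congr h33).symm.trans hc3.symm
        have hLq4 : (C.edge (p4 + 1)).lab = false := by rw [C.lab_succ, L4]; rfl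
        refine C.jump hmin (δ := p) (π := p + 3) (γ := p4 + 1) ?_ ?_ ?_ ?_ ?_ ?_ ?_
        · intro h
          have h' : p4 ≡ p2 [MOD C.n] := by
            have h5 : p4 + 1 ≡ p2 + 1 [MOD C.n] := by
              have h6 := hP2.add_right 1
              rw [show p + 2 + 1 = p + 3 by omega] at h6
              exact h.trans h6.symm
            exact Nat.ModEq.add_right_cancel' 1 h5
          have hh := congrArg MEdge.lab (C.edge_congr h')
          rw [L2, L4] at hh
          exact Bool.noConfusion hh
        · intro h
          have h' : p4 ≡ p + 1 [MOD C.n] := by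
            have h5 : p4 + 2 ≡ p + 1 + 2 [MOD C.n] := by
              rw [show p4 + 2 = p4 + 1 + 1 by omega, show p + 1 + 2 = p + 3 by omega]
              exact h
            exact Nat.ModEq.add_right_cancel' 2 h5
          have hh : (⟨true, s, s(a, d)⟩ : MEdge V) = ⟨true, t, s(a, b)⟩ := by
            rw [← hp4e, ← hp1e]; exact C.edge_congr (h'.trans hq1.symm)
          rw [MEdge.mk.injEq] at hh
          rcases Sym2.eq_iff.mp hh.2.2 with ⟨-, u2⟩ | ⟨u1, -⟩
          · exact hbd u2.symm
          · exact hab u1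
        · intro h
          have h' : p4 ≡ p [MOD C.n] := by
            have h5 : p4 + 3 ≡ p + 3 [MOD C.n] := by
              rwa [show p4 + 3 = p4 + 1 + 2 by omega]
            exact Nat.ModEq.add_right_cancel' 3 h5
          have hh := congrArg MEdge.lab (C.edge_congr h')
          rw [Lp, L4] at hh
          exact Bool.noConfusion hh
        · right; exact Nat.ModEq.refl _
        · rw [hpe, ← ha4, hV3]
        · rw [hLq4, Lp]
        · rw [hE3lab, Lp]; rfl
      · -- B1(i) : e3 and e4 both leave d : impossible
        have h := sp p3 p4 (by rw [← hd3, ← hd4]) (by rw [L3, L4])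
        have hh : (⟨true, s, s(c, d)⟩ : MEdge V) = ⟨true, s, s(a, d)⟩ := by
          rw [← hp3e, ← hp4e]; exact C.edge_congr h
        rw [MEdge.mk.injEq] at hh
        rcases Sym2.eq_iff.mp hh.2.2 with ⟨u1, -⟩ | ⟨u1, -⟩
        · exact hac u1.symm
        · exact hcd u1
    · -- CASE B2 : e4 leaves a (right after e), e1 enters a
      have hq4 : p4 ≡ p + 1 [MOD C.n] := sp p4 (p + 1) (by rw [← ha4, ← hva]) (by rw [L4, Lq])
      rcases Sym2.eq_iff.mp Ep3 with ⟨hc3, hd3⟩ | ⟨hc3, hd3⟩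
      · -- B2(ii) : e3 and e4 both enter d : impossible
        have h := sp (p3 + 1) (p4 + 1) (by rw [← hd3, ← hd4])
          (by rw [C.lab_succ, C.lab_succ, L3, L4])
        have h' : p3 ≡ p4 [MOD C.n] := Nat.ModEq.add_right_cancel' 1 h
        have hh : (⟨true, s, s(c, d)⟩ : MEdge V) = ⟨true, s, s(a, d)⟩ := by
          rw [← hp3e, ← hp4e]; exact C.edge_congr h'
        rw [MEdge.mk.injEq] at hh
        rcases Sym2.eq_iff.mp hh.2.2 with ⟨u1, -⟩ | ⟨u1, -⟩
        · exact hac u1.symm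
        · exact hcd u1
      · -- B2(i)
        have h3p : p3 + 1 ≡ p [MOD C.n] := sp (p3 + 1) p (by rw [← hc3, ← hvc])
          (by rw [C.lab_succ, L3, Lp]; rfl)
        have hvp2 : C.vert (p + 2) = d := by
          have h5 := hq4.add_right 1
          rw [show p + 1 + 1 = p + 2 by omega] at h5
          exact (C.vert_congr h5).symm.trans hd4.symm
        have hLp2 : (C.edge (p + 2)).lab = false := by
          rw [show p + 2 = (p + 1) + 1 by omega, C.lab_succ, Lq]; rfl
        refine C.jump hmin (δ := p3) (π := p + 2) (γ := p2 + 1) ?_ ?_ ?_ ?_ ?_ ?_ ?_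
        · intro h
          have h' : p2 ≡ p4 [MOD C.n] := by
            have h5 : p2 + 1 ≡ p + 1 + 1 [MOD C.n] := by
              rwa [show p + 1 + 1 = p + 2 by omega]
            exact (Nat.ModEq.add_right_cancel' 1 h5).trans hq4.symm
          have hh := congrArg MEdge.lab (C.edge_congr h')
          rw [L2, L4] at hh
          exact Bool.noConfusion hh
        · intro h
          have h' : p2 ≡ p [MOD C.n] := by
            have h5 : p2 + 2 ≡ p + 2 [MOD C.n] := by
              rwa [show p2 + 2 = p2 + 1 + 1 by omega]
            exact Nat.ModEq.add_right_cancel' 2 h5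
          have hh : (⟨false, t, s(b, c)⟩ : MEdge V) = ⟨false, u, s(a, c)⟩ := by
            rw [← hp2e, ← hpe]; exact C.edge_congr h'
          rw [MEdge.mk.injEq] at hh
          rcases Sym2.eq_iff.mp hh.2.2 with ⟨u1, -⟩ | ⟨u1, -⟩
          · exact hab u1.symm
          · exact hbc u1
        · intro h
          have h' : p2 ≡ p3 [MOD C.n] := by
            have h5 : p2 + 3 ≡ p3 + 3 [MOD C.n] := by
              rw [show p2 + 3 = p2 + 1 + 2 by omega]
              refine h.trans ?_
              have h6 := h3p.add_right 2
              rw [show p3 + 1 + 2 = p3 + 3 by omega] at h6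
              exact h6.symm
            exact Nat.ModEq.add_right_cancel' 3 h5
          have hh := congrArg MEdge.lab (C.edge_congr h')
          rw [L2, L3] at hh
          exact Bool.noConfusion hh
        · right
          have h5 := h3p.add_right 2
          rwa [show p3 + 1 + 2 = p3 + 3 by omega] at h5
        · rw [hp3e, ← hcA, hvp2]
        · rw [LqB, L3]
        · rw [hLp2, L3]; rfl
    · -- e1 and e4 both enter a : impossible
      have h := sp (p1 + 1) (p4 + 1) (by rw [← ha1, ← ha4])
        (by rw [C.lab_succ, C.lab_succ, L1, L4])
      have h' : p1 ≡ p4 [MOD C.n] := Nat.ModEq.add_right_cancel' 1 h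
      have hh : (⟨true, t, s(a, b)⟩ : MEdge V) = ⟨true, s, s(a, d)⟩ := by
        rw [← hp1e, ← hp4e]; exact C.edge_congr h'
      rw [MEdge.mk.injEq] at hh
      rcases Sym2.eq_iff.mp hh.2.2 with ⟨-, u2⟩ | ⟨u1, -⟩
      · exact hbd u2
      · exact had u1
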